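/- arXiv:1703.04777 — 3 statements merged into one kernel-verified Lean document; each statement's English description precedes it below -/
import Mathlib

section
/- For an irrational real number c > 0, the ℤ-saturated submonoid of ℝ₊ generated by c and ℕ equals {nc + m : n ∈ ℕ, m ∈ ℤ, nc + m ≥ 0}, and this monoid is not finitely generated. -/
/-!
Saturation under subtracting natural numbers forces every nonnegative `n c + m` into the monoid,
and these numbers already form a saturated monoid. A submonoid of `ℝ₊` generated by finitely many
elements has no element strictly between `0` and its smallest positive generator, whereas
`n c + m` takes arbitrarily small positive values: `ℤ c + ℤ` is dense, and a small positive
`g = a c + b` with `a < 0` may be replaced by `g * fract g⁻¹ = 1 - ⌊g⁻¹⌋ g ∈ (0, g)`, whose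
coefficient of `c` is nonnegative.
-/

/-- A `ℤ`-saturated submonoid of `ℝ₊`: a set of nonnegative reals containing `0`,
closed under addition, and such that `x ≥ 0` with `x + m ∈ Λ` for some `m ∈ ℕ` implies `x ∈ Λ`. -/
def IsZSatSubmonoid (Λ : Set ℝ) : Prop :=
  (∀ x ∈ Λ, 0 ≤ x) ∧ (0 : ℝ) ∈ Λ ∧ (∀ x ∈ Λ, ∀ y ∈ Λ, x + y ∈ Λ) ∧
    (∀ x : ℝ, 0 ≤ x → ∀ m : ℕ, x + (m : ℝ) ∈ Λ → x ∈ Λ)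

open Set

def nonnegNatMulAddInt (c : ℝ) : Set ℝ :=
  {x : ℝ | ∃ (n : ℕ) (m : ℤ), x = n * c + m ∧ 0 ≤ x}

theorem isZSatSubmonoid_nonnegNatMulAddInt (c : ℝ) : IsZSatSubmonoid (nonnegNatMulAddInt c) := by
  refine ⟨fun x ⟨_, _, _, hx⟩ => hx, ⟨0, 0, by simp, le_rfl⟩, ?_, ?_⟩
  · rintro _ ⟨n₁, m₁, rfl, hx⟩ _ ⟨n₂, m₂, rfl, hy⟩
    exact ⟨n₁ + n₂, m₁ + m₂, by push_cast; ring, add_nonneg hx hy⟩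
  · rintro x hx k ⟨n, m, hnm, -⟩
    exact ⟨n, m - k, by push_cast; linarith, hx⟩

namespace IsZSatSubmonoid

variable {Λ : Set ℝ} {c : ℝ}

theorem natCast_mul_mem (hΛ : IsZSatSubmonoid Λ) (hc : c ∈ Λ) (n : ℕ) : (n : ℝ) * c ∈ Λ := by
  induction n with
  | zero => simpa using hΛ.2.1
  | succ n ih => simpa [add_mul] using hΛ.2.2.1 _ ih _ hc

theorem nonnegNatMulAddInt_subset (hΛ : IsZSatSubmonoid Λ) (hc : c ∈ Λ)
    (hnat : ∀ n : ℕ, (n : ℝ) ∈ Λ) : nonnegNatMulAddInt c ⊆ Λ := by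
  rintro _ ⟨n, m, rfl, hx⟩
  obtain ⟨k, rfl | rfl⟩ := Int.eq_nat_or_neg m
  · simpa using hΛ.2.2.1 _ (hΛ.natCast_mul_mem hc n) _ (hnat k)
  · exact hΛ.2.2.2 _ hx k (by simpa using hΛ.natCast_mul_mem hc n)

end IsZSatSubmonoid

theorem sInter_isZSatSubmonoid_eq_nonnegNatMulAddInt {c : ℝ} (hc : 0 ≤ c) :
    ⋂₀ {Λ : Set ℝ | IsZSatSubmonoid Λ ∧ c ∈ Λ ∧ ∀ n : ℕ, (n : ℝ) ∈ Λ} =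
      nonnegNatMulAddInt c := by
  refine subset_antisymm (sInter_subset_of_mem ⟨isZSatSubmonoid_nonnegNatMulAddInt c, ?_, ?_⟩)
    (subset_sInter fun Λ ⟨hΛ, hcΛ, hnat⟩ => hΛ.nonnegNatMulAddInt_subset hcΛ hnat)
  · exact ⟨1, 0, by simp, hc⟩
  · exact fun n => ⟨0, n, by simp, n.cast_nonneg⟩

theorem Irrational.mul_fract_inv_mem_Ioo {g : ℝ} (hg : Irrational g) (hg0 : 0 < g) :
    g * Int.fract g⁻¹ ∈ Ioo 0 g :=
  ⟨mul_pos hg0 (Int.fract_pos.2 (hg.inv.ne_int _)),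
    mul_lt_of_lt_one_right hg0 (Int.fract_lt_one _)⟩

theorem exists_natCast_mul_add_intCast_mem_Ioo {c : ℝ} (hirr : Irrational c) {ε : ℝ}
    (hε : 0 < ε) : ∃ (n : ℕ) (m : ℤ), (n : ℝ) * c + m ∈ Ioo 0 ε := by
  have hdense : Dense (AddSubgroup.closure {c, 1} : Set ℝ) :=
    dense_addSubgroupClosure_pair_iff.2 (by simpa using hirr)
  obtain ⟨g, hg, hgε⟩ := hdense.exists_between hε
  obtain ⟨a, b, rfl⟩ := AddSubgroup.mem_closure_pair.1 hg
  simp only [zsmul_eq_mul, mul_one] at hgε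
  rcases le_or_gt 0 a with ha | ha
  · lift a to ℕ using ha
    exact ⟨a, b, by simpa using hgε⟩
  · set g : ℝ := a * c + b
    have hg_irr : Irrational g := (hirr.intCast_mul ha.ne).add_intCast b
    have hk : 0 ≤ ⌊g⁻¹⌋ := Int.floor_nonneg.2 (inv_nonneg.2 hgε.1.le)
    lift -(⌊g⁻¹⌋ * a) to ℕ using by nlinarith with n hn
    have hn' : (n : ℝ) = -(⌊g⁻¹⌋ * a) := by exact_mod_cast hn
    have hflip : (n : ℝ) * c + ((1 - ⌊g⁻¹⌋ * b : ℤ) : ℝ) = g * Int.fract g⁻¹ := by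
      rw [hn', Int.fract, mul_sub, mul_inv_cancel₀ hgε.1.ne']
      push_cast
      ring
    obtain ⟨hpos, hlt⟩ := hg_irr.mul_fract_inv_mem_Ioo hgε.1
    exact ⟨n, 1 - ⌊g⁻¹⌋ * b, hflip ▸ ⟨hpos, hlt.trans hgε.2⟩⟩

theorem AddSubmonoid.exists_mem_pos_le_of_mem_closure {α : Type*} [AddCommMonoid α]
    [PartialOrder α] [IsOrderedAddMonoid α] {s : Set α} (hs : ∀ y ∈ s, 0 ≤ y) {x : α}
    (hx : x ∈ AddSubmonoid.closure s) (hx0 : x ≠ 0) : ∃ y ∈ s, 0 < y ∧ y ≤ x := by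
  suffices 0 ≤ x ∧ (x = 0 ∨ ∃ y ∈ s, 0 < y ∧ y ≤ x) from this.2.resolve_left hx0
  clear hx0
  induction hx using AddSubmonoid.closure_induction with
  | mem x hx =>
    exact ⟨hs x hx, or_iff_not_imp_left.2 fun h => ⟨x, hx, (hs x hx).lt_of_ne' h, le_rfl⟩⟩
  | zero => exact ⟨le_rfl, Or.inl rfl⟩
  | add x y _ _ hx hy =>
    refine ⟨add_nonneg hx.1 hy.1, ?_⟩
    rcases hx.2 with rfl | ⟨z, hz, hz0, hzx⟩
    · simpa using hy.2
    · exact Or.inr ⟨z, hz, hz0, le_add_of_le_of_nonneg hzx hy.1⟩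

theorem Finset.exists_pos_le_of_pos (F : Finset ℝ) : ∃ ε > 0, ∀ y ∈ F, 0 < y → ε ≤ y := by
  classical
  set P := insert 1 (F.filter (0 < ·))
  refine ⟨P.min' (insert_nonempty _ _), (P.lt_min'_iff _).2 ?_, fun y hy hy0 => P.min'_le _ ?_⟩
  · simp [P]
  · simp [P, hy, hy0]

theorem not_exists_finset_addSubmonoidClosure_eq_nonnegNatMulAddInt {c : ℝ}
    (hirr : Irrational c) :
    ¬ ∃ F : Finset ℝ, (AddSubmonoid.closure (F : Set ℝ) : Set ℝ) = nonnegNatMulAddInt c := by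
  rintro ⟨F, hF⟩
  have hF_nonneg : ∀ y ∈ (F : Set ℝ), 0 ≤ y := fun y hy =>
    (isZSatSubmonoid_nonnegNatMulAddInt c).1 y (hF ▸ AddSubmonoid.subset_closure hy)
  obtain ⟨ε, hε, hεF⟩ := F.exists_pos_le_of_pos
  obtain ⟨n, m, hpos, hlt⟩ := exists_natCast_mul_add_intCast_mem_Ioo hirr hε
  have hmem : (n : ℝ) * c + m ∈ AddSubmonoid.closure (F : Set ℝ) := by
    rw [← SetLike.mem_coe, hF]
    exact ⟨n, m, rfl, hpos.le⟩
  obtain ⟨y, hy, hy0, hyx⟩ :=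
    AddSubmonoid.exists_mem_pos_le_of_mem_closure hF_nonneg hmem hpos.ne'
  exact (hεF y hy hy0).not_gt (hyx.trans_lt hlt)

/-- For an irrational `c > 0`, the `ℤ`-saturated submonoid of `ℝ₊` generated by `c` and `ℕ`
equals `{n•c + m : n ∈ ℕ, m ∈ ℤ, n•c + m ≥ 0}`, and this monoid is not finitely generated. -/
theorem stmt_1 (c : ℝ) (hc : 0 < c) (hirr : Irrational c) :
    (⋂₀ {Λ : Set ℝ | IsZSatSubmonoid Λ ∧ c ∈ Λ ∧ ∀ n : ℕ, (n : ℝ) ∈ Λ}) =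
      {x : ℝ | ∃ (n : ℕ) (m : ℤ), x = n * c + m ∧ 0 ≤ x} ∧
    ¬ ∃ F : Finset ℝ, (AddSubmonoid.closure (F : Set ℝ) : Set ℝ) =
      {x : ℝ | ∃ (n : ℕ) (m : ℤ), x = n * c + m ∧ 0 ≤ x} :=
  ⟨sInter_isZSatSubmonoid_eq_nonnegNatMulAddInt hc.le,
    not_exists_finset_addSubmonoidClosure_eq_nonnegNatMulAddInt hirr⟩
end

section
/- Let A = ℂ[T] be the polynomial ring with the ℤ-action where the generator g acts by g·f(T) = f(T − 2πi) composed with multiplication by a fixed scalar e^{2πiα} for a real number α. Then the group cohomology H^m(ℤ, A) vanishes for all m ≥ 1; moreover H^0(ℤ, A) = ℂ if α ∈ ℤ and H^0(ℤ, A) = 0 if α ∉ ℤ. -/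
/-!
Write `Δ = g - 1`, where `g f = l • f(X - c)` with `c ≠ 0`. The operator `Δ` never raises
degrees. If `l ≠ 1`, comparing leading coefficients shows that `Δ` is injective, so it is
bijective on each finite-dimensional space of polynomials of degree `< n`. If `l = 1`, a
polynomial in the kernel is `c`-periodic, hence constant; moreover `Δ` lowers degrees, so
`f ↦ Δ (f * X)` is an injective, degree-nonincreasing operator and is onto for the same reason.
-/

open Polynomial Function

namespace Polynomial

theorem surjective_of_injective_of_degree_le {K : Type*} [Field K] {T : K[X] →ₗ[K] K[X]}
    (hinj : Injective T) (hdeg : ∀ f, (T f).degree ≤ f.degree) : Surjective T := by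
  intro g
  have hmaps (n : ℕ) : ∀ f ∈ degreeLT K n, T f ∈ degreeLT K n := fun f hf =>
    mem_degreeLT.2 ((hdeg f).trans_lt (mem_degreeLT.1 hf))
  have hg : g ∈ degreeLT K (g.natDegree + 1) := mem_degreeLT.2 <|
    degree_le_natDegree.trans_lt <| mod_cast g.natDegree.lt_succ_self
  have hsurj : Surjective (T.restrict (hmaps (g.natDegree + 1))) :=
    LinearMap.injective_iff_surjective.1 fun f₁ f₂ h =>
      Subtype.ext (hinj (congrArg Subtype.val h))
  obtain ⟨f, hf⟩ := hsurj ⟨g, hg⟩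
  exact ⟨f, congrArg Subtype.val hf⟩

section CommRing

variable {R : Type*} [CommRing R]

noncomputable def twistedDiff (l c : R) : R[X] →ₗ[R] R[X] :=
  l • taylor (-c) - LinearMap.id

theorem twistedDiff_apply (l c : R) (f : R[X]) :
    twistedDiff l c f = l • f.comp (X - C c) - f := by
  simp [twistedDiff, taylor_apply, sub_eq_add_neg]

theorem degree_twistedDiff_le (l c : R) (f : R[X]) : (twistedDiff l c f).degree ≤ f.degree := by
  refine (degree_sub_le _ _).trans (max_le ((degree_smul_le _ _).trans ?_) le_rfl)
  exact (degree_taylor f (-c)).le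

theorem degree_twistedDiff_one_lt (c : R) {f : R[X]} (hf : f ≠ 0) :
    (twistedDiff 1 c f).degree < f.degree := by
  have h := degree_sub_lt_left (degree_taylor f (-c)) (mt (taylor_eq_zero _ _).1 hf)
    (leadingCoeff_taylor _ _)
  simpa [twistedDiff, degree_taylor] using h

end CommRing

section IsDomain

variable {R : Type*} [CommRing R] [IsDomain R]

theorem twistedDiff_injective {l : R} (hl : l ≠ 1) (c : R) : Injective (twistedDiff l c) := by
  refine (injective_iff_map_eq_zero _).2 fun f hf => ?_
  have hcoeff := congrArg (coeff · f.natDegree) hf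
  simp only [twistedDiff, LinearMap.sub_apply, LinearMap.smul_apply, LinearMap.id_apply,
    coeff_sub, coeff_smul, coeff_taylor_natDegree, coeff_natDegree, smul_eq_mul,
    coeff_zero] at hcoeff
  have : (l - 1) * f.leadingCoeff = 0 := by linear_combination hcoeff
  exact leadingCoeff_eq_zero.1 ((mul_eq_zero.1 this).resolve_left (sub_ne_zero.2 hl))

theorem eq_C_of_periodic [CharZero R] {f : R[X]} {c : R} (hc : c ≠ 0)
    (hf : Periodic (fun x => f.eval x) c) : f = C (f.eval 0) :=
  f.eq_of_infinite_eval_eq _ <| Set.infinite_of_injective_forall_mem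
    (fun m n h => Nat.cast_injective (mul_right_cancel₀ hc h)) fun n => by
      simpa using hf.nat_mul_eq n

theorem twistedDiff_one_eq_zero_iff [CharZero R] {c : R} (hc : c ≠ 0) {f : R[X]} :
    twistedDiff 1 c f = 0 ↔ ∃ b, f = C b := by
  simp only [twistedDiff, one_smul, LinearMap.sub_apply, LinearMap.id_apply, sub_eq_zero]
  refine ⟨fun h => ⟨_, eq_C_of_periodic (neg_ne_zero.2 hc) fun x => ?_⟩, ?_⟩
  · show f.eval (x + -c) = f.eval x
    rw [← taylor_eval, h]
  · rintro ⟨b, rfl⟩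
    exact taylor_C _ b

end IsDomain

theorem twistedDiff_surjective {K : Type*} [Field K] [CharZero K] (l : K) {c : K} (hc : c ≠ 0) :
    Surjective (twistedDiff l c) := by
  rcases eq_or_ne l 1 with rfl | hl
  · suffices Surjective ((twistedDiff 1 c).comp (LinearMap.mulRight K X)) from
      Surjective.of_comp (g := LinearMap.mulRight K X) this
    refine surjective_of_injective_of_degree_le ?_ fun f => ?_
    · refine (injective_iff_map_eq_zero _).2 fun f hf => ?_
      obtain ⟨b, hb⟩ := (twistedDiff_one_eq_zero_iff hc).1 hf
      have hb0 : b = 0 := by simpa using (congrArg (eval 0) hb).symm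
      simpa [hb0] using hb
    · rcases eq_or_ne f 0 with rfl | hf
      · simp
      have h := degree_twistedDiff_one_lt c (mul_ne_zero hf X_ne_zero)
      rw [degree_mul_X, degree_eq_natDegree hf] at h
      rw [degree_eq_natDegree hf]
      exact Order.le_of_lt_succ h
  · exact surjective_of_injective_of_degree_le (twistedDiff_injective hl c)
      (degree_twistedDiff_le l c)

end Polynomial

/-- Let `ℤ` act on `ℂ[T]` by letting the generator send `f(T)` to `e^{2πiα}·f(T − 2πi)`.
Then `H^m(ℤ, ℂ[T]) = 0` for `m ≥ 1`, and `H^0(ℤ, ℂ[T])` is `ℂ` if `α ∈ ℤ` and `0` otherwise.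
Since group cohomology of `ℤ` is computed by the two-term complex `g − 1 : ℂ[T] → ℂ[T]`,
this says: the map `f(T) ↦ e^{2πiα}·f(T − 2πi) − f(T)` is surjective, with kernel the
constants if `α ∈ ℤ` and kernel `0` if `α ∉ ℤ`. -/
theorem stmt_4 (α : ℝ)
    (L : Polynomial ℂ → Polynomial ℂ)
    (hL : ∀ f : Polynomial ℂ, L f =
      Complex.exp (2 * (Real.pi : ℂ) * Complex.I * (α : ℂ)) •
          f.comp (X - C (2 * (Real.pi : ℂ) * Complex.I)) - f) :
    Function.Surjective L ∧
      ((∃ m : ℤ, α = (m : ℝ)) → ∀ f, L f = 0 ↔ ∃ c : ℂ, f = C c) ∧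
      (¬(∃ m : ℤ, α = (m : ℝ)) → ∀ f, L f = 0 ↔ f = 0) := by
  set c : ℂ := 2 * Real.pi * Complex.I
  have hc : c ≠ 0 := Complex.two_pi_I_ne_zero
  have hl : Complex.exp (c * α) = 1 ↔ ∃ m : ℤ, α = m := by
    rw [Complex.exp_eq_one_iff]
    refine exists_congr fun m => ?_
    rw [mul_comm (m : ℂ), mul_right_inj' hc]
    exact_mod_cast Iff.rfl
  obtain rfl : L = twistedDiff (Complex.exp (c * α)) c :=
    funext fun f => (hL f).trans (twistedDiff_apply _ _ f).symm
  refine ⟨twistedDiff_surjective _ hc, fun hα f => ?_, fun hα f => ?_⟩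
  · rw [hl.2 hα]
    exact twistedDiff_one_eq_zero_iff hc
  · exact (twistedDiff_injective (mt hl.1 hα) c).eq_iff' (map_zero _)
end

section
/- With B as above (free A-module on {S^μ T^a}), let ℤ^r = Hom(P^gp, ℤ) act on B by g·T_j = T_j − 2πi g(p_j) and g·S^μ = e^{2πi g_ℝ(μ)} S^μ. Consider the ℤ^r-module t^{−λ}·B with twisted action g·(t^{−λ}x) = e^{−2πi g_ℝ(λ)} t^{−λ}(g·x). Then the invariants (t^{−λ}B)^{ℤ^r} are a free A-module with basis {S^μ t^{−λ} : μ ∈ Λ∖⟨P⁺⟩, μ − λ ∈ P^gp}. -/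
open MvPolynomial
open scoped Classical

set_option linter.unusedSectionVars false
set_option maxHeartbeats 1000000

noncomputable section

/-- The real cone generated by a submonoid `P` of a real vector space `V`. -/
def realCone {V : Type} [AddCommGroup V] [Module ℝ V] (P : AddSubmonoid V) : AddSubmonoid V :=
  AddSubmonoid.closure {v : V | ∃ r : ℝ, 0 ≤ r ∧ ∃ p ∈ P, v = r • p}

/-- The ideal `⟨P⁺⟩` of `Λ` generated by the nonzero elements of `P`. -/
def idealPplus {V : Type} [AddCommGroup V] [Module ℝ V] (P Λ : AddSubmonoid V) : Set V :=
  {x : V | ∃ p ∈ P, p ≠ (0 : V) ∧ ∃ l ∈ Λ, x = p + l}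

/-- Index set `Λ ∖ ⟨P⁺⟩` for the monomials `S^μ`. -/
abbrev ΛIdx {V : Type} [AddCommGroup V] [Module ℝ V] (P Λ : AddSubmonoid V) : Type :=
  {v : V // v ∈ Λ ∧ v ∉ idealPplus P Λ}

/-- `B = ⊕_{μ ∈ Λ∖⟨P⁺⟩} S^μ · A[T₁,…,T_r]`, the free `A`-module on the monomials
`S^μ T^a`. -/
abbrev Bmod {V : Type} [AddCommGroup V] [Module ℝ V] (A : Type) [CommRing A]
    (P Λ : AddSubmonoid V) (r : ℕ) : Type :=
  ΛIdx P Λ →₀ MvPolynomial (Fin r) A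

/-- The action of `g ∈ ℤ^r = Hom(P^gp, ℤ)` on `B`, with `g·T_j = T_j − 2πi·g(p_j)` and
`g·S^μ = e^{2πi g_ℝ(μ)}·S^μ` (here `ℓ g` is the `ℝ`-linear extension `g_ℝ`). -/
noncomputable def actB {V : Type} [AddCommGroup V] [Module ℝ V] (A : Type) [CommRing A]
    [Algebra ℂ A] (P Λ : AddSubmonoid V) (r : ℕ)
    (ℓ : (Fin r → ℤ) → (V →ₗ[ℝ] ℝ)) (g : Fin r → ℤ) :
    Bmod A P Λ r →ₗ[ℂ] Bmod A P Λ r :=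
  Finsupp.lsum ℂ fun μ : ΛIdx P Λ =>
    (Finsupp.lsingle μ) ∘ₗ
      (Complex.exp (2 * (Real.pi : ℂ) * Complex.I * ((ℓ g μ.1 : ℝ) : ℂ)) •
        LinearMap.restrictScalars ℂ (MvPolynomial.aeval (R := A)
          (fun j : Fin r =>
            X j - C (algebraMap ℂ A
              (2 * (Real.pi : ℂ) * Complex.I * (g j : ℂ))))).toLinearMap)

namespace Stmt10Aux

variable {A : Type} [CommRing A] [Algebra ℂ A] {r : ℕ}


variable {A : Type} [CommRing A] [Algebra ℂ A] {r : ℕ}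

lemma smul_eq_Cmul (z : ℂ) (q : MvPolynomial (Fin r) A) :
    z • q = C (algebraMap ℂ A z) * q := by
  ext a
  rw [coeff_smul, coeff_C_mul, Algebra.smul_def]

lemma nat_regular (n : ℕ) (hn : n ≠ 0) (x : A) (h : (n : A) * x = 0) : x = 0 := by
  have h1 : algebraMap ℂ A ((n : ℂ)⁻¹) * ((n : A) * x) = 0 := by rw [h, mul_zero]
  rwa [← mul_assoc, ← map_natCast (algebraMap ℂ A) n, ← map_mul,
    inv_mul_cancel₀ (Nat.cast_ne_zero.2 hn), map_one, one_mul] at h1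

lemma cx_regular (z : ℂ) (hz : z ≠ 0) (x : A) (h : algebraMap ℂ A z * x = 0) : x = 0 := by
  have h1 : algebraMap ℂ A (z⁻¹) * (algebraMap ℂ A z * x) = 0 := by rw [h, mul_zero]
  rwa [← mul_assoc, ← map_mul, inv_mul_cancel₀ hz, map_one, one_mul] at h1

lemma coeff_pderiv (i : Fin r) (q : MvPolynomial (Fin r) A) (b : Fin r →₀ ℕ) :
    coeff b (pderiv i q) = ((b i + 1 : ℕ) : A) * coeff (b + Finsupp.single i 1) q := by
  induction q using MvPolynomial.induction_on' with
  | add p q hp hq => rw [map_add, coeff_add, coeff_add, hp, hq, mul_add]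
  | monomial s a =>
    rw [pderiv_monomial, coeff_monomial, coeff_monomial]
    by_cases hs : s = b + Finsupp.single i 1
    · subst hs
      rw [if_pos, if_pos rfl]
      · have hsi : ((b + Finsupp.single i 1 : Fin r →₀ ℕ)) i = b i + 1 := by
          rw [Finsupp.add_apply, Finsupp.single_eq_same]
        rw [hsi]
        push_cast
        ring
      · ext k
        by_cases hk : k = i
        · subst hk
          simp [Finsupp.tsub_apply, Finsupp.add_apply, Finsupp.single_eq_same]
        · simp [Finsupp.tsub_apply, Finsupp.add_apply, Finsupp.single_apply, Ne.symm hk, hk]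
    · rw [if_neg hs, mul_zero]
      by_cases hd : s - Finsupp.single i 1 = b
      · rw [if_pos hd]
        by_cases hsi : s i = 0
        · simp [hsi]
        · exfalso
          apply hs
          ext k
          by_cases hk : k = i
          · subst hk
            have := congrFun (congrArg (fun f : Fin r →₀ ℕ => (f : Fin r → ℕ)) hd) k
            simp only [Finsupp.tsub_apply, Finsupp.single_eq_same] at this ⊢
            rw [Finsupp.add_apply, Finsupp.single_eq_same]
            omega
          · have := congrFun (congrArg (fun f : Fin r →₀ ℕ => (f : Fin r → ℕ)) hd) k
            simp only [Finsupp.tsub_apply, Finsupp.single_apply, Ne.symm hk, hk, if_false] at this ⊢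
            rw [Finsupp.add_apply, Finsupp.single_apply, if_neg (Ne.symm hk)]
            omega
      · rw [if_neg hd]

lemma eq_C_of_pderiv_eq_zero (q : MvPolynomial (Fin r) A) (h : ∀ i, pderiv i q = 0) :
    q = C (coeff 0 q) := by
  ext a
  rw [coeff_C]
  by_cases ha : 0 = a
  · rw [if_pos ha, ← ha]
  · rw [if_neg ha]
    have ha' : a ≠ 0 := fun h' => ha h'.symm
    obtain ⟨i, hi⟩ : ∃ i, a i ≠ 0 := by
      by_contra hc
      push_neg at hc
      exact ha' (Finsupp.ext fun k => hc k)
    have hab : (a - Finsupp.single i 1) + Finsupp.single i 1 = a := by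
      ext k
      by_cases hk : k = i
      · subst hk
        simp only [Finsupp.add_apply, Finsupp.tsub_apply, Finsupp.single_eq_same]
        omega
      · simp only [Finsupp.add_apply, Finsupp.tsub_apply, Finsupp.single_apply, Ne.symm hk,
          hk, if_false]
        omega
    have h0 := coeff_pderiv i q (a - Finsupp.single i 1)
    rw [h i, hab] at h0
    exact (nat_regular _ (Nat.succ_ne_zero _) _ h0.symm)

lemma pderiv_aeval_shift (d : Fin r → A) (i : Fin r) (q : MvPolynomial (Fin r) A) :
    pderiv i (aeval (fun k => X k - C (d k)) q) = aeval (fun k => X k - C (d k)) (pderiv i q) := by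
  induction q using MvPolynomial.induction_on with
  | C a => rw [aeval_C, pderiv_C, map_zero]; simp [Algebra.algebraMap_eq_smul_one]
  | add p q hp hq => simp only [map_add, hp, hq]
  | mul_X p n ih =>
    have hXn : (aeval fun k => X k - C (d k)) ((X n : MvPolynomial (Fin r) A)) = X n - C (d n) := by rw [aeval_X]
    have hpd : pderiv i ((X n : MvPolynomial (Fin r) A) - C (d n)) = pderiv i (X n) := by
      rw [map_sub, pderiv_C, sub_zero]
    have hfix : (aeval fun k => X k - C (d k)) (pderiv i (X n : MvPolynomial (Fin r) A))
        = pderiv i (X n) := by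
      by_cases hn : n = i
      · subst hn; rw [pderiv_X_self, map_one]
      · rw [pderiv_X_of_ne hn, map_zero]
    rw [map_mul, hXn, pderiv_mul, hpd, ih, pderiv_mul, map_add, map_mul, map_mul, hXn, hfix]

lemma affine_of_pderiv_const (q : MvPolynomial (Fin r) A) (b : Fin r → A)
    (h : ∀ i, pderiv i q = C (b i)) :
    ∃ e : A, q = C e + ∑ i, C (b i) * X i := by
  set q' := q - ∑ i, C (b i) * X i with hq'
  have hd : ∀ i, pderiv i q' = 0 := by
    intro i
    rw [hq', map_sub, h i, map_sum, sub_eq_zero]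
    rw [Finset.sum_eq_single i]
    · rw [pderiv_C_mul, pderiv_X_self, mul_one]
    · intro k _ hk
      rw [pderiv_C_mul, pderiv_X_of_ne hk, mul_zero]
    · intro hi; exact absurd (Finset.mem_univ i) hi
  have := eq_C_of_pderiv_eq_zero q' hd
  exact ⟨coeff 0 q', by rw [← this, hq']; ring⟩


lemma sum_add_single (b : Fin r →₀ ℕ) (i : Fin r) :
    ((b + Finsupp.single i 1).sum fun _ m => m) = (b.sum fun _ m => m) + 1 := by
  rw [Finsupp.sum_add_index' (fun _ => rfl) (fun _ _ _ => rfl),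
    Finsupp.sum_single_index rfl]

lemma constCase (u : ℂ) (q : MvPolynomial (Fin r) A) (e : Fin r → ℂ)
    (hpd : ∀ i, pderiv i q = 0)
    (h : ∀ j : Fin r,
      aeval (fun k => X k - C (if k = j then algebraMap ℂ A u else 0)) q = e j • q) :
    q = C (coeff 0 q) ∧ (q ≠ 0 → ∀ j, e j = 1) := by
  have hq := eq_C_of_pderiv_eq_zero q hpd
  refine ⟨hq, fun h0 j => ?_⟩
  by_contra hne
  have hsub : (1 : ℂ) - e j ≠ 0 := sub_ne_zero.mpr fun hh => hne hh.symm
  have hj := h j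
  rw [hq, aeval_C, MvPolynomial.algebraMap_eq] at hj
  have hz : (1 - e j) • (C (coeff 0 q) : MvPolynomial (Fin r) A) = 0 := by
    rw [sub_smul, one_smul]
    exact sub_eq_zero.mpr hj
  have h2 : (C (coeff 0 q) : MvPolynomial (Fin r) A) = 0 := by
    have h3 := congrArg (fun y : MvPolynomial (Fin r) A => (1 - e j)⁻¹ • y) hz
    simpa [inv_smul_smul₀ hsub] using h3
  exact h0 (by rw [hq, h2])

lemma mainPoly (u : ℂ) (hu : u ≠ 0) :
    ∀ (n : ℕ) (q : MvPolynomial (Fin r) A) (e : Fin r → ℂ),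
      totalDegree q ≤ n →
      (∀ j : Fin r,
        aeval (fun k => X k - C (if k = j then algebraMap ℂ A u else 0)) q = e j • q) →
      q = C (coeff 0 q) ∧ (q ≠ 0 → ∀ j, e j = 1) := by
  intro n
  induction n with
  | zero =>
    intro q e hdeg h
    apply constCase u q e _ h
    intro i
    apply MvPolynomial.ext
    intro b
    rw [coeff_pderiv, coeff_zero]
    have hc : coeff (b + Finsupp.single i 1) q = 0 := by
      apply coeff_eq_zero_of_totalDegree_lt
      show q.totalDegree < (b + Finsupp.single i 1).sum fun _ m => m
      rw [sum_add_single]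
      omega
    rw [hc, mul_zero]
  | succ n IH =>
    intro q e hdeg h
    by_cases hz : ∀ i, pderiv i q = 0
    · exact constCase u q e hz h
    · push_neg at hz
      obtain ⟨i0, hi0⟩ := hz
      have hder : ∀ i j, aeval (fun k => X k - C (if k = j then algebraMap ℂ A u else 0))
          (pderiv i q) = e j • pderiv i q := by
        intro i j
        rw [← pderiv_aeval_shift (fun k => if k = j then algebraMap ℂ A u else 0) i q, h j,
          smul_eq_Cmul, smul_eq_Cmul, pderiv_C_mul]
      have hdeg' : ∀ i, totalDegree (pderiv i q) ≤ n := by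
        intro i
        rw [MvPolynomial.totalDegree]
        apply Finset.sup_le
        intro b hb
        have hco : coeff b (pderiv i q) ≠ 0 := mem_support_iff.mp hb
        rw [coeff_pderiv] at hco
        have hco2 : coeff (b + Finsupp.single i 1) q ≠ 0 := fun hzz => hco (by rw [hzz, mul_zero])
        have hle := le_totalDegree (mem_support_iff.mpr hco2)
        rw [sum_add_single] at hle
        omega
      have he1 : ∀ j, e j = 1 := (IH (pderiv i0 q) e (hdeg' i0) (hder i0)).2 hi0
      have hCd : ∀ i, pderiv i q = C (coeff 0 (pderiv i q)) :=
        fun i => (IH (pderiv i q) e (hdeg' i) (hder i)).1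
      obtain ⟨e0, hq⟩ := affine_of_pderiv_const q (fun i => coeff 0 (pderiv i q)) hCd
      exfalso
      apply hi0
      rw [hCd i0]
      suffices hb : coeff 0 (pderiv i0 q) = 0 by rw [hb, map_zero]
      have hj := h i0
      rw [he1 i0, one_smul, hq] at hj
      rw [map_add, aeval_C, MvPolynomial.algebraMap_eq, map_sum] at hj
      have hterm : ∀ k : Fin r,
          (aeval (fun k => X k - C (if k = i0 then algebraMap ℂ A u else 0)))
            (C (coeff 0 (pderiv k q)) * X k)
          = C (coeff 0 (pderiv k q)) * X k
            - (if k = i0 then C (coeff 0 (pderiv k q) * algebraMap ℂ A u) else 0) := by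
        intro k
        rw [map_mul, aeval_C, MvPolynomial.algebraMap_eq, aeval_X, mul_sub, map_mul]
        congr 1
        by_cases hk : k = i0
        · rw [if_pos hk, if_pos hk]
        · rw [if_neg hk, if_neg hk, map_zero, mul_zero]
      rw [Finset.sum_congr rfl fun k _ => hterm k, Finset.sum_sub_distrib,
        Finset.sum_ite_eq' Finset.univ i0
          (fun k => (C (coeff 0 (pderiv k q) * algebraMap ℂ A u) : MvPolynomial (Fin r) A)),
        if_pos (Finset.mem_univ i0)] at hj
      have hCz : (C (coeff 0 (pderiv i0 q) * algebraMap ℂ A u) : MvPolynomial (Fin r) A) = 0 := by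
        rw [add_sub] at hj
        exact sub_eq_self.mp hj
      have h5 : coeff 0 (pderiv i0 q) * algebraMap ℂ A u = 0 := by
        rwa [MvPolynomial.C_eq_zero] at hCz
      rw [mul_comm] at h5
      exact cx_regular u hu _ h5


lemma actB_apply {V : Type} [AddCommGroup V] [Module ℝ V]
    (P Λ : AddSubmonoid V) (ℓ : (Fin r → ℤ) → (V →ₗ[ℝ] ℝ)) (g : Fin r → ℤ)
    (x : Bmod A P Λ r) (ν : ΛIdx P Λ) :
    actB A P Λ r ℓ g x ν =
      Complex.exp (2 * (Real.pi : ℂ) * Complex.I * ((ℓ g ν.1 : ℝ) : ℂ)) •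
        (aeval (fun j : Fin r => X j - C (algebraMap ℂ A
          (2 * (Real.pi : ℂ) * Complex.I * (g j : ℂ)))) (x ν)) := by
  rw [actB, Finsupp.coe_lsum]
  rw [Finsupp.sum_apply]
  simp only [LinearMap.coe_comp, Function.comp_apply, Finsupp.lsingle_apply,
    LinearMap.smul_apply, LinearMap.coe_restrictScalars, AlgHom.toLinearMap_apply]
  rw [Finsupp.sum]
  rw [Finset.sum_eq_single ν]
  · rw [Finsupp.single_eq_same]
  · intro b _ hb
    rw [Finsupp.single_eq_of_ne' hb]
  · intro hν
    rw [Finsupp.notMem_support_iff.mp hν, map_zero, smul_zero, Finsupp.single_zero,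
      Finsupp.coe_zero, Pi.zero_apply]

end Stmt10Aux

open Stmt10Aux

/-- The invariants of the twisted module `t^{−λ}·B` (where `g` acts on `t^{−λ}x` by
`e^{−2πi g_ℝ(λ)}·t^{−λ}(g·x)`) form a free `A`-module with basis the monomials
`S^μ t^{−λ}` for `μ ∈ Λ∖⟨P⁺⟩` with `μ − λ ∈ P^gp`. -/
theorem stmt_10 {V : Type} [AddCommGroup V] [Module ℝ V]
    (A : Type) [CommRing A] [Algebra ℂ A] (P Λ : AddSubmonoid V) (r : ℕ)
    (hfine : P.FG)
    (hsharp : ∀ p ∈ P, -p ∈ P → p = 0)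
    (hsat : ∀ v ∈ AddSubgroup.closure (P : Set V), ∀ n : ℕ, 0 < n → n • v ∈ P → v ∈ P)
    (p : Fin r → V) (hp : ∀ j, p j ∈ P)
    (hbasis : ∀ v ∈ AddSubgroup.closure (P : Set V), ∃! c : Fin r → ℤ, v = ∑ j, c j • p j)
    (hPΛ : P ≤ Λ) (hcone : Λ ≤ realCone P)
    (hΛsat : ∀ v ∈ realCone P, ∀ q ∈ P, v + q ∈ Λ → v ∈ Λ)
    (ℓ : (Fin r → ℤ) → (V →ₗ[ℝ] ℝ))
    (hℓ : ∀ (g : Fin r → ℤ) (j : Fin r), ℓ g (p j) = (g j : ℝ))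
    (hℓadd : ∀ g g' : Fin r → ℤ, ℓ (g + g') = ℓ g + ℓ g')
    (lam : V) (hlam : lam ∈ AddSubgroup.closure (Λ : Set V)) :
    ∃ N : Submodule A (Bmod A P Λ r),
      (N : Set (Bmod A P Λ r)) =
        {x : Bmod A P Λ r | ∀ g : Fin r → ℤ,
          actB A P Λ r ℓ g x =
            Complex.exp (2 * (Real.pi : ℂ) * Complex.I * ((ℓ g lam : ℝ) : ℂ)) • x} ∧
      ∃ bb : Module.Basis {μ : ΛIdx P Λ // μ.1 - lam ∈ AddSubgroup.closure (P : Set V)} A N,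
        ∀ μ, (bb μ : Bmod A P Λ r) = Finsupp.single μ.1 1 := by
  classical
  -- abbreviations
  set tpi : ℂ := 2 * (Real.pi : ℂ) * Complex.I with htpi
  have htpi0 : tpi ≠ 0 := Complex.two_pi_I_ne_zero
  -- exponential equality from integer difference
  have hexp_int : ∀ s t : ℝ, (∃ m : ℤ, s - t = (m : ℝ)) →
      Complex.exp (tpi * (s : ℂ)) = Complex.exp (tpi * (t : ℂ)) := by
    rintro s t ⟨m, hm⟩
    rw [Complex.exp_eq_exp_iff_exists_int]
    refine ⟨m, ?_⟩
    have hst : (s : ℂ) = (t : ℂ) + (m : ℂ) := by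
      have : s = t + (m : ℝ) := by linarith [hm]
      exact_mod_cast congrArg (fun y : ℝ => (y : ℂ)) this
    rw [hst, htpi]
    ring
  -- integer representation of ℓ g on P^gp
  have hℓint : ∀ (g : Fin r → ℤ) (w : V) (c : Fin r → ℤ), w = ∑ j, c j • p j →
      ℓ g w = ((∑ j, c j * g j : ℤ) : ℝ) := by
    intro g w c hc
    rw [hc, map_sum]
    have hterm : ∀ j ∈ Finset.univ, ℓ g (c j • p j) = ((c j * g j : ℤ) : ℝ) := by
      intro j _
      rw [map_zsmul, hℓ g j, zsmul_eq_mul]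
      push_cast
      ring
    rw [Finset.sum_congr rfl hterm]
    push_cast
    ring
  -- the family of basis vectors
  set vfam : {μ : ΛIdx P Λ // μ.1 - lam ∈ AddSubgroup.closure (P : Set V)} → Bmod A P Λ r :=
    fun μ => Finsupp.single μ.1 (1 : MvPolynomial (Fin r) A) with hvfam
  -- coordinatewise characterization of invariance
  have hmem : ∀ x : Bmod A P Λ r,
      (∀ g : Fin r → ℤ, actB A P Λ r ℓ g x = Complex.exp (tpi * ((ℓ g lam : ℝ) : ℂ)) • x) ↔
      (∀ (g : Fin r → ℤ) (ν : ΛIdx P Λ),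
        Complex.exp (tpi * ((ℓ g ν.1 : ℝ) : ℂ)) •
          (aeval (fun j : Fin r => X j - C (algebraMap ℂ A (tpi * (g j : ℂ)))) (x ν))
        = Complex.exp (tpi * ((ℓ g lam : ℝ) : ℂ)) • x ν) := by
    intro x
    constructor
    · intro h g ν
      have h1 := DFunLike.congr_fun (h g) ν
      rw [actB_apply, Finsupp.smul_apply, ← htpi] at h1
      exact h1
    · intro h g
      refine Finsupp.ext fun ν => ?_
      rw [actB_apply, Finsupp.smul_apply, ← htpi]
      exact h g ν
  -- invariance of the basis vectors
  have hinv_single : ∀ (μ : ΛIdx P Λ), μ.1 - lam ∈ AddSubgroup.closure (P : Set V) →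
      ∀ g : Fin r → ℤ, actB A P Λ r ℓ g (Finsupp.single μ (1 : MvPolynomial (Fin r) A)) =
        Complex.exp (tpi * ((ℓ g lam : ℝ) : ℂ)) • Finsupp.single μ 1 := by
    intro μ hμ g
    obtain ⟨c, hc⟩ := (hbasis _ hμ).exists
    have hint : ℓ g μ.1 - ℓ g lam = ((∑ j, c j * g j : ℤ) : ℝ) := by
      rw [← map_sub]
      exact hℓint g _ c hc
    have hexp : Complex.exp (tpi * ((ℓ g μ.1 : ℝ) : ℂ)) =
        Complex.exp (tpi * ((ℓ g lam : ℝ) : ℂ)) := hexp_int _ _ ⟨_, hint⟩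
    refine Finsupp.ext fun ν => ?_
    rw [actB_apply, Finsupp.smul_apply, ← htpi]
    by_cases hν : μ = ν
    · subst hν
      rw [Finsupp.single_eq_same, map_one, hexp]
    · rw [Finsupp.single_eq_of_ne' hν, map_zero, smul_zero, smul_zero]
  -- geometry: everything lives in the real span of the p j
  have hPspan : ∀ w ∈ P, w ∈ Submodule.span ℝ (Set.range p) := by
    intro w hw
    obtain ⟨c, hc⟩ := (hbasis w (AddSubgroup.subset_closure hw)).exists
    rw [hc]
    refine Submodule.sum_mem _ fun j _ => ?_
    rw [← Int.cast_smul_eq_zsmul ℝ]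
    exact Submodule.smul_mem _ _ (Submodule.subset_span ⟨j, rfl⟩)
  have hconeSpan : realCone P ≤ (Submodule.span ℝ (Set.range p)).toAddSubmonoid := by
    apply AddSubmonoid.closure_le.mpr
    rintro v ⟨t, ht, w, hw, rfl⟩
    exact Submodule.smul_mem _ _ (hPspan w hw)
  have hΛspan : ∀ w, w ∈ Λ → w ∈ Submodule.span ℝ (Set.range p) :=
    fun w hw => hconeSpan (hcone hw)
  have hlamspan : lam ∈ Submodule.span ℝ (Set.range p) := by
    have h1 : AddSubgroup.closure (Λ : Set V) ≤
        (Submodule.span ℝ (Set.range p)).toAddSubgroup :=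
      (AddSubgroup.closure_le _).mpr fun w hw => hΛspan w hw
    exact h1 hlam
  -- the invariant set as a submodule (to prove one inclusion)
  have hsmul_comm : ∀ (z : ℂ) (a : A) (m : MvPolynomial (Fin r) A),
      z • (a • m) = a • (z • m) := by
    intro z a m
    rw [smul_eq_Cmul, smul_eq_Cmul, mul_smul_comm]
  -- the key per-coordinate analysis for invariant x
  have key : ∀ x : Bmod A P Λ r,
      (∀ (g : Fin r → ℤ) (ν : ΛIdx P Λ),
        Complex.exp (tpi * ((ℓ g ν.1 : ℝ) : ℂ)) •
          (aeval (fun j : Fin r => X j - C (algebraMap ℂ A (tpi * (g j : ℂ)))) (x ν))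
        = Complex.exp (tpi * ((ℓ g lam : ℝ) : ℂ)) • x ν) →
      ∀ ν : ΛIdx P Λ, x ν ≠ 0 →
        (x ν = C (coeff 0 (x ν)) ∧ ν.1 - lam ∈ AddSubgroup.closure (P : Set V)) := by
    intro x hx ν hxν
    have heig : ∀ g : Fin r → ℤ,
        aeval (fun j : Fin r => X j - C (algebraMap ℂ A (tpi * (g j : ℂ)))) (x ν)
        = Complex.exp (tpi * ((ℓ g (lam - ν.1) : ℝ) : ℂ)) • x ν := by
      intro g
      have h2 := congrArg (fun y : MvPolynomial (Fin r) A =>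
        Complex.exp (tpi * ((-(ℓ g ν.1) : ℝ) : ℂ)) • y) (hx g ν)
      rw [smul_smul, smul_smul, ← Complex.exp_add, ← Complex.exp_add] at h2
      have e1 : tpi * ((-(ℓ g ν.1) : ℝ) : ℂ) + tpi * ((ℓ g ν.1 : ℝ) : ℂ) = 0 := by
        push_cast
        ring
      have e2 : tpi * ((-(ℓ g ν.1) : ℝ) : ℂ) + tpi * ((ℓ g lam : ℝ) : ℂ)
          = tpi * ((ℓ g (lam - ν.1) : ℝ) : ℂ) := by
        rw [map_sub]
        push_cast
        ring
      rw [e1, e2, Complex.exp_zero, one_smul] at h2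
      exact h2
    set e : Fin r → ℂ :=
      fun j => Complex.exp (tpi * ((ℓ (Pi.single j 1) (lam - ν.1) : ℝ) : ℂ)) with he
    have hyp : ∀ j : Fin r,
        aeval (fun k => X k - C (if k = j then algebraMap ℂ A tpi else 0)) (x ν)
          = e j • x ν := by
      intro j
      have hfun : (fun k : Fin r => X k - C (if k = j then algebraMap ℂ A tpi else 0))
          = (fun k : Fin r => X k - C (algebraMap ℂ A
              (tpi * ((Pi.single j 1 : Fin r → ℤ) k : ℂ)))) := by
        funext k
        by_cases hk : k = j
        · subst hk
          rw [if_pos rfl, Pi.single_eq_same]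
          norm_num
        · rw [if_neg hk, Pi.single_eq_of_ne hk]
          norm_num
      rw [hfun]
      exact heig (Pi.single j 1)
    obtain ⟨hconst, hone⟩ :=
      mainPoly tpi htpi0 (totalDegree (x ν)) (x ν) e le_rfl hyp
    refine ⟨hconst, ?_⟩
    have hint : ∀ j : Fin r, ∃ m : ℤ, ℓ (Pi.single j 1) (lam - ν.1) = (m : ℝ) := by
      intro j
      have h1 := hone hxν j
      rw [he] at h1
      simp only at h1
      rw [Complex.exp_eq_one_iff] at h1
      obtain ⟨m, hm⟩ := h1
      refine ⟨m, ?_⟩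
      have h3 : ((ℓ (Pi.single j 1) (lam - ν.1) : ℝ) : ℂ) = (m : ℂ) := by
        apply mul_left_cancel₀ htpi0
        rw [hm, htpi]
        ring
      exact_mod_cast h3
    -- geometry: ν.1 - lam lies in the span, with integer coordinates
    have hspanV : ν.1 - lam ∈ Submodule.span ℝ (Set.range p) :=
      sub_mem (hΛspan ν.1 ν.2.1) hlamspan
    obtain ⟨c, hc⟩ := (Submodule.mem_span_range_iff_exists_fun ℝ).mp hspanV
    have hcj : ∀ j, c j = ℓ (Pi.single j 1) (ν.1 - lam) := by
      intro j
      rw [← hc, map_sum]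
      rw [Finset.sum_congr rfl fun k _ => ?_]
      · rw [Finset.sum_ite_eq' Finset.univ j c, if_pos (Finset.mem_univ j)]
      · rw [map_smul, hℓ, Pi.single_apply, smul_eq_mul]
        by_cases hk : k = j
        · rw [if_pos hk, if_pos hk]
          norm_num
        · rw [if_neg hk, if_neg hk]
          norm_num
    choose m hm using hint
    have hcm : ∀ j, c j = ((-(m j) : ℤ) : ℝ) := by
      intro j
      rw [hcj j]
      have hneg : ℓ (Pi.single j 1) (ν.1 - lam) = -ℓ (Pi.single j 1) (lam - ν.1) := by
        rw [← map_neg, neg_sub]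
      rw [hneg, hm j]
      push_cast
      ring
    have hrepr : ν.1 - lam = ∑ j, (-(m j)) • p j := by
      rw [← hc]
      refine Finset.sum_congr rfl fun j _ => ?_
      rw [hcm j, Int.cast_smul_eq_zsmul]
    rw [hrepr]
    exact AddSubgroup.sum_mem _ fun j _ =>
      AddSubgroup.zsmul_mem _ (AddSubgroup.subset_closure (hp j)) _
  -- linear independence of the basis family
  have hli : LinearIndependent A vfam := by
    set cf : MvPolynomial (Fin r) A →ₗ[A] A :=
      { toFun := fun q => coeff 0 q
        map_add' := fun a b => coeff_add 0 a b
        map_smul' := fun a q => coeff_smul 0 a q } with hcf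
    apply LinearIndependent.of_comp (Finsupp.mapRange.linearMap cf)
    have h1 : LinearIndependent A
        (fun μ : {μ : ΛIdx P Λ // μ.1 - lam ∈ AddSubgroup.closure (P : Set V)} =>
          Finsupp.single μ.1 (1 : A)) :=
      (Finsupp.basisSingleOne (R := A) (ι := ΛIdx P Λ)).linearIndependent.comp
        Subtype.val Subtype.val_injective
    convert h1 using 1
    funext μ
    simp only [Function.comp_apply, hvfam, Finsupp.mapRange.linearMap_apply,
      Finsupp.mapRange_single, hcf, LinearMap.coe_mk, AddHom.coe_mk, coeff_zero_one]
  -- assemble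
  refine ⟨Submodule.span A (Set.range vfam), ?_, Module.Basis.span hli,
    fun μ => congrArg Subtype.val (Module.Basis.span_apply hli μ)⟩
  apply Set.eq_of_subset_of_subset
  · -- span ⊆ invariants
    intro x hx
    have hle : Submodule.span A (Set.range vfam) ≤
        ({ carrier := {y : Bmod A P Λ r | ∀ g : Fin r → ℤ,
              actB A P Λ r ℓ g y = Complex.exp (tpi * ((ℓ g lam : ℝ) : ℂ)) • y}
           add_mem' := fun {a b} ha hb g => by
             rw [map_add, ha g, hb g, smul_add]
           zero_mem' := fun g => by rw [map_zero, smul_zero]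
           smul_mem' := fun a y hy g => by
             have hax : actB A P Λ r ℓ g (a • y) = a • actB A P Λ r ℓ g y := by
               refine Finsupp.ext fun ν => ?_
               rw [actB_apply, Finsupp.smul_apply, Finsupp.smul_apply, actB_apply,
                 map_smul, hsmul_comm]
             rw [hax, hy g]
             refine Finsupp.ext fun ν => ?_
             rw [Finsupp.smul_apply, Finsupp.smul_apply, Finsupp.smul_apply,
               Finsupp.smul_apply, hsmul_comm] } : Submodule A (Bmod A P Λ r)) := by
      apply Submodule.span_le.mpr
      rintro _ ⟨μ, rfl⟩
      exact fun g => hinv_single μ.1 μ.2 g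
    exact hle hx
  · -- invariants ⊆ span
    intro x hx
    have hx' := (hmem x).mp hx
    have hkey := key x hx'
    rw [← Finsupp.sum_single x, Finsupp.sum]
    apply Submodule.sum_mem
    intro ν hν
    have hxν : x ν ≠ 0 := Finsupp.mem_support_iff.mp hν
    obtain ⟨hconst, hcond⟩ := hkey ν hxν
    have hsingle : Finsupp.single ν (x ν)
        = (coeff 0 (x ν)) • Finsupp.single ν (1 : MvPolynomial (Fin r) A) := by
      rw [Finsupp.smul_single, smul_eq_C_mul, mul_one, ← hconst]
    rw [hsingle]
    exact Submodule.smul_mem _ _ (Submodule.subset_span ⟨⟨ν, hcond⟩, rfl⟩)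


end
end
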